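/- arXiv:2103.00190 — 5 statements merged into one kernel-verified Lean document; each statement's English description precedes it below -/
import Mathlib

section
/- The map f_B(x) = o + 2rx/(xᵀx + 1) is a smooth surjection from ℝ^n onto the closed ball P^B = {y ∈ ℝ^n : ‖y − o‖₂ ≤ r}. -/
/-- The map `f_B(x) = o + 2rx/(xᵀx + 1)` is a smooth surjection
from `ℝ^n` onto the closed ball `{y : ‖y − o‖ ≤ r}` (boundary included). -/
theorem ball_constraint_elimination_surjection
    (n : ℕ) (o : EuclideanSpace ℝ (Fin n)) (r : ℝ) (hr : 0 < r) :
    ContDiff ℝ (⊤ : ℕ∞) (fun x : EuclideanSpace ℝ (Fin n) =>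
      o + (2 * r / (‖x‖ ^ 2 + 1)) • x) ∧
    Set.range (fun x : EuclideanSpace ℝ (Fin n) =>
      o + (2 * r / (‖x‖ ^ 2 + 1)) • x) = Metric.closedBall o r := by
  constructor
  · have h1 : ContDiff ℝ (⊤ : ℕ∞) fun x : EuclideanSpace ℝ (Fin n) => ‖x‖ ^ 2 + 1 := by
      have : ContDiff ℝ (⊤ : ℕ∞) fun x : EuclideanSpace ℝ (Fin n) =>
          (inner ℝ x x : ℝ) + 1 := (contDiff_id.inner ℝ contDiff_id).add contDiff_const
      convert this using 2 with x
      rw [real_inner_self_eq_norm_sq]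
    have hne : ∀ x : EuclideanSpace ℝ (Fin n), ‖x‖ ^ 2 + 1 ≠ 0 := fun x => by positivity
    exact contDiff_const.add ((contDiff_const.div h1 hne).smul contDiff_id)
  · ext y
    simp only [Set.mem_range, Metric.mem_closedBall, dist_eq_norm]
    constructor
    · rintro ⟨x, rfl⟩
      have hx : (0:ℝ) < ‖x‖ ^ 2 + 1 := by positivity
      rw [add_sub_cancel_left, norm_smul]
      have : |2 * r / (‖x‖ ^ 2 + 1)| = 2 * r / (‖x‖ ^ 2 + 1) := by
        rw [abs_of_nonneg]; positivity
      rw [Real.norm_eq_abs, this, div_mul_eq_mul_div, div_le_iff₀ hx]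
      nlinarith [norm_nonneg x, sq_nonneg (‖x‖ - 1)]
    · intro hy
      by_cases h0 : y = o
      · exact ⟨0, by simp [h0]⟩
      · set s := ‖y - o‖ with hs
        have hs0 : 0 < s := by
          simpa [hs] using sub_ne_zero.mpr h0
        have hsr : s ≤ r := hy
        set d := Real.sqrt (r ^ 2 - s ^ 2) with hd
        have hd2 : d ^ 2 = r ^ 2 - s ^ 2 := Real.sq_sqrt (by nlinarith)
        have hdr : d < r := by
          have hdn : 0 ≤ d := Real.sqrt_nonneg _
          nlinarith
        set t := (r - d) / s ^ 2 with ht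
        have ht0 : 0 < t := by
          apply div_pos (by linarith) (by positivity)
        have key : s ^ 2 * t ^ 2 - 2 * r * t + 1 = 0 := by
          have e0 : s ^ 2 * t = r - d := by
            rw [ht]; field_simp [hs0.ne']
          have e1 : s ^ 2 * t ^ 2 = t * (r - d) := by rw [← e0]; ring
          have h4 : t * (r + d) = 1 := by
            rw [ht]; field_simp; nlinarith [hd2]
          nlinarith [e1, h4]
        refine ⟨t • (y - o), ?_⟩
        have hnx : ‖t • (y - o)‖ ^ 2 = t ^ 2 * s ^ 2 := by
          rw [norm_smul, mul_pow, Real.norm_eq_abs, sq_abs, hs]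
        rw [hnx]
        have hden : t ^ 2 * s ^ 2 + 1 = 2 * r * t := by nlinarith
        rw [hden, smul_smul]
        have : 2 * r / (2 * r * t) * t = 1 := by
          field_simp
        rw [this, one_smul, add_sub_cancel]
end

section
/- For q in the closed ball of center o and radius r with q ≠ o, the point ξ = ((r − √(r² − ‖q−o‖₂²)) / ‖q−o‖₂²) (q − o) satisfies f_B(ξ) = q, where f_B(x) = o + 2rx/(xᵀx+1). For q = o, ξ = 0 satisfies f_B(0) = o. -/
/-- For `q` in the closed ball of center `o` and radius `r` with
`q ≠ o`, the point `ξ = ((r − √(r² − ‖q−o‖²))/‖q−o‖²) (q − o)` satisfies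
`f_B(ξ) = q`, where `f_B(x) = o + 2rx/(xᵀx+1)`; and for `q = o`, `f_B(0) = o`. -/
theorem ball_surjection_local_inverse
    (n : ℕ) (o q : EuclideanSpace ℝ (Fin n)) (r : ℝ) (hr : 0 < r)
    (hq : ‖q - o‖ ≤ r) :
    (q ≠ o →
      (fun x : EuclideanSpace ℝ (Fin n) => o + (2 * r / (‖x‖ ^ 2 + 1)) • x)
        (((r - Real.sqrt (r ^ 2 - ‖q - o‖ ^ 2)) / ‖q - o‖ ^ 2) • (q - o)) = q) ∧
    (fun x : EuclideanSpace ℝ (Fin n) => o + (2 * r / (‖x‖ ^ 2 + 1)) • x) 0 = o := by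
  constructor
  · intro hqo
    have hd : 0 < ‖q - o‖ := by
      rw [norm_pos_iff]; exact sub_ne_zero_of_ne hqo
    set d := ‖q - o‖ with hdef
    set s := Real.sqrt (r ^ 2 - d ^ 2) with hsdef
    have hnn : 0 ≤ r ^ 2 - d ^ 2 := by nlinarith
    have hs2 : s ^ 2 = r ^ 2 - d ^ 2 := Real.sq_sqrt hnn
    have hs0 : 0 ≤ s := Real.sqrt_nonneg _
    have hslt : s < r := by nlinarith
    set c := (r - s) / d ^ 2 with hcdef
    have hc0 : 0 ≤ c := div_nonneg (by linarith) (by positivity)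
    have hnorm : ‖c • (q - o)‖ ^ 2 = c ^ 2 * d ^ 2 := by
      rw [norm_smul, mul_pow, ← hdef, Real.norm_eq_abs, sq_abs]
    simp only
    rw [hnorm, smul_smul]
    have hcoef : 2 * r / (c ^ 2 * d ^ 2 + 1) * c = 1 := by
      rw [hcdef]
      have hd2 : d ^ 2 ≠ 0 := by positivity
      have hrs : r - s ≠ 0 := by linarith
      field_simp
      nlinarith [hs2]
    rw [hcoef, one_smul, add_sub_cancel]
  · simp
end

section
/- The map f_H(x) = v₀ + 4 V̂[x]² / (xᵀx + 1)², where [x]² is the entry-wise square, is a smooth surjection from ℝ^{n̂} onto the convex polytope P = {v₀ + V̂ w : w ⪰ 0, ‖w‖₁ ≤ 1} = convex hull of vertices v₀, v₁, ..., v_{n̂}. -/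
/-- The map `f_H(x) = v₀ + 4 V̂ [x]² / (xᵀx + 1)²` is a smooth
surjection from `ℝ^n̂` onto the convex polytope
`{v₀ + V̂ w : w ⪰ 0, ‖w‖₁ ≤ 1}`, which is the convex hull of `v₀, v₁, …, v_n̂`. -/
theorem polytope_constraint_elimination_surjection
    (n nh : ℕ) (v : Fin (nh + 1) → (Fin n → ℝ)) :
    ContDiff ℝ (⊤ : ℕ∞) (fun x : EuclideanSpace ℝ (Fin nh) =>
      v 0 + (4 / (‖x‖ ^ 2 + 1) ^ 2) • ∑ i : Fin nh, ((x i) ^ 2) • (v i.succ - v 0)) ∧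
    Set.range (fun x : EuclideanSpace ℝ (Fin nh) =>
        v 0 + (4 / (‖x‖ ^ 2 + 1) ^ 2) • ∑ i : Fin nh, ((x i) ^ 2) • (v i.succ - v 0)) =
      {y : Fin n → ℝ | ∃ w : Fin nh → ℝ, (∀ i, 0 ≤ w i) ∧ (∑ i, w i) ≤ 1 ∧
        y = v 0 + ∑ i : Fin nh, (w i) • (v i.succ - v 0)} ∧
    {y : Fin n → ℝ | ∃ w : Fin nh → ℝ, (∀ i, 0 ≤ w i) ∧ (∑ i, w i) ≤ 1 ∧
        y = v 0 + ∑ i : Fin nh, (w i) • (v i.succ - v 0)} =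
      convexHull ℝ (Set.range v) := by
  have hns : ∀ x : EuclideanSpace ℝ (Fin nh), ‖x‖ ^ 2 = ∑ i, (x i) ^ 2 := by
    intro x
    simpa [Real.norm_eq_abs, sq_abs] using PiLp.norm_sq_eq_of_L2 (fun _ : Fin nh => ℝ) x
  refine ⟨?_, ?_, ?_⟩
  · -- smoothness
    apply contDiff_const.add
    have h1 : ContDiff ℝ (⊤ : ℕ∞) (fun x : EuclideanSpace ℝ (Fin nh) => 4 / (‖x‖ ^ 2 + 1) ^ 2) := by
      apply ContDiff.div contDiff_const
      · exact ((contDiff_norm_sq ℝ).add contDiff_const).pow 2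
      · intro x; positivity
    apply h1.smul
    apply ContDiff.sum
    intro i _
    have hp : ContDiff ℝ (⊤ : ℕ∞) (fun x : EuclideanSpace ℝ (Fin nh) => x i) :=
      (EuclideanSpace.proj (𝕜 := ℝ) i).contDiff
    exact (hp.pow 2).smul contDiff_const
  · -- range description
    ext y
    simp only [Set.mem_range, Set.mem_setOf_eq]
    constructor
    · rintro ⟨x, rfl⟩
      refine ⟨fun i => (4 / (‖x‖ ^ 2 + 1) ^ 2) * (x i) ^ 2, fun i => by positivity, ?_, ?_⟩
      · rw [← Finset.mul_sum, ← hns x]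
        have h0 : (0:ℝ) ≤ ‖x‖ ^ 2 := sq_nonneg _
        rw [div_mul_eq_mul_div, div_le_one (by positivity)]
        nlinarith [sq_nonneg (‖x‖ ^ 2 - 1)]
      · congr 1
        rw [Finset.smul_sum]
        exact Finset.sum_congr rfl fun i _ => (smul_smul _ _ _)
    · rintro ⟨w, hw0, hw1, rfl⟩
      have hs0 : 0 ≤ ∑ i, w i := Finset.sum_nonneg fun i _ => hw0 i
      set s := ∑ i, w i with hsdef
      set d := Real.sqrt (1 - s) with hd
      have hd0 : 0 ≤ d := Real.sqrt_nonneg _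
      have hd2 : d ^ 2 = 1 - s := Real.sq_sqrt (by linarith)
      set l : ℝ := ((1 + d) ^ 2)⁻¹ with hl
      have hl0 : 0 < l := by positivity
      have hl1 : l * (1 + d) ^ 2 = 1 := inv_mul_cancel₀ (by positivity)
      set x : EuclideanSpace ℝ (Fin nh) := WithLp.toLp 2 (fun i => Real.sqrt (l * w i)) with hxdef
      refine ⟨x, ?_⟩
      have hx2 : ∀ i, (x i) ^ 2 = l * w i := fun i =>
        Real.sq_sqrt (mul_nonneg hl0.le (hw0 i))
      have hnx : ‖x‖ ^ 2 = l * s := by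
        rw [hns]
        simp only [hx2]
        rw [← Finset.mul_sum]
      have h1 : l * s + 1 = (2 + 2 * d) * l := by linear_combination l * hd2 - hl1
      have key : 4 / (l * s + 1) ^ 2 * l = 1 := by
        have hD : (0:ℝ) < 2 + 2 * d := by linarith
        have e1 : ((2 + 2 * d) * l) ^ 2 = (4 * l) * (l * (1 + d) ^ 2) := by ring
        rw [h1, e1, hl1, mul_one]
        field_simp
      congr 1
      rw [hnx]
      simp only [hx2]
      rw [Finset.smul_sum]
      refine Finset.sum_congr rfl fun i _ => ?_
      rw [smul_smul, show 4 / (l * s + 1) ^ 2 * (l * w i) = (4 / (l * s + 1) ^ 2 * l) * w i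
        by ring, key, one_mul]
  · -- equals convex hull
    apply Set.Subset.antisymm
    · rintro y ⟨w, hw0, hw1, rfl⟩
      set c : Fin (nh + 1) → ℝ := fun j => Fin.cases (1 - ∑ i, w i) w j with hc
      have hc0 : ∀ j, 0 ≤ c j := by
        intro j
        induction j using Fin.cases with
        | zero => simp only [hc, Fin.cases_zero]; linarith
        | succ i => simpa only [hc, Fin.cases_succ] using hw0 i
      have hcs : ∑ j, c j = 1 := by
        rw [Fin.sum_univ_succ]
        simp only [hc, Fin.cases_zero, Fin.cases_succ]
        ring
      have hmem := Finset.centerMass_mem_convexHull (Finset.univ) (w := c) (z := v)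
        (fun j _ => hc0 j) (by rw [hcs]; norm_num) (fun j _ => Set.mem_range_self j)
      rw [Finset.centerMass_eq_of_sum_1 _ _ hcs] at hmem
      have hy : v 0 + ∑ i, w i • (v i.succ - v 0) = ∑ j, c j • v j := by
        rw [Fin.sum_univ_succ]
        simp only [hc, Fin.cases_zero, Fin.cases_succ, sub_smul, one_smul, smul_sub,
          Finset.sum_sub_distrib, ← Finset.sum_smul]
        abel
      rw [hy]
      exact hmem
    · apply convexHull_min
      · rintro _ ⟨j, rfl⟩
        induction j using Fin.cases with
        | zero => exact ⟨0, fun i => le_refl 0, by simp, by simp⟩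
        | succ i =>
          refine ⟨Pi.single i 1, ?_, ?_, ?_⟩
          · intro k
            rcases eq_or_ne k i with rfl | h
            · simp
            · simp [Pi.single_apply, h]
          · rw [Finset.sum_pi_single' i 1]
            simp
          · rw [Finset.sum_eq_single i]
            · simp
            · intro b _ hb
              simp [Pi.single_apply, hb]
            · simp
      · intro y1 hy1 y2 hy2 a b ha hb hab
        obtain ⟨w1, h10, h11, rfl⟩ := hy1
        obtain ⟨w2, h20, h21, rfl⟩ := hy2
        refine ⟨fun i => a * w1 i + b * w2 i,
          fun i => add_nonneg (mul_nonneg ha (h10 i)) (mul_nonneg hb (h20 i)), ?_, ?_⟩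
        · rw [Finset.sum_add_distrib, ← Finset.mul_sum, ← Finset.mul_sum]
          nlinarith
        · have hsum : ∑ i, (a * w1 i + b * w2 i) • (v i.succ - v 0) =
              a • (∑ i, w1 i • (v i.succ - v 0)) + b • (∑ i, w2 i • (v i.succ - v 0)) := by
            rw [Finset.smul_sum, Finset.smul_sum, ← Finset.sum_add_distrib]
            refine Finset.sum_congr rfl fun i _ => ?_
            rw [add_smul, smul_smul, smul_smul]
          have h0 : a • v 0 + b • v 0 = v 0 := by rw [← add_smul, hab, one_smul]
          rw [hsum, smul_add, smul_add, add_add_add_comm, h0]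
end

section
/- A bounded convex polytope P^H = {x ∈ ℝ^n : A x ⪯ b} with nonempty interior equals the image of the standard simplex {w ∈ ℝ^{n̂} : w ⪰ 0, ‖w‖₁ ≤ 1} under the affine map w ↦ v₀ + V̂ w, where v₀, ..., v_{n̂} are the vertices of P^H (i.e., P^H is the convex hull of its vertices). -/
/-!
A compact convex set in a locally convex space is, by Krein–Milman, the closed convex hull of
its extreme points; when there are finitely many of them their convex hull is already closed.
The parametrisation by `{w ⪰ 0, ∑ w ≤ 1}` comes from writing a convex combination
`∑ μᵢ vᵢ` with `∑ μᵢ = 1` as `v₀ + ∑_{i ≥ 1} μᵢ (vᵢ - v₀)`, i.e. dropping the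
coordinate `μ₀` of the standard simplex.
-/

open Set

theorem convex_setOf_mulVec_le {𝕜 m n : Type*} [CommRing 𝕜] [PartialOrder 𝕜]
    [IsOrderedRing 𝕜] [Fintype n] (A : Matrix m n 𝕜) (b : m → 𝕜) :
    Convex 𝕜 {x | ∀ i, A.mulVec x i ≤ b i} := by
  simp only [ofPred_forall]
  exact convex_iInter fun i =>
    convex_halfSpace_le ((LinearMap.proj i).comp A.mulVecLin).isLinear (b i)

theorem IsCompact.convexHull_extremePoints_eq {E : Type*} [AddCommGroup E] [Module ℝ E]
    [TopologicalSpace E] [T2Space E] [IsTopologicalAddGroup E] [ContinuousSMul ℝ E]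
    [LocallyConvexSpace ℝ E] {s : Set E} (hscomp : IsCompact s) (hsconv : Convex ℝ s)
    (hfin : (s.extremePoints ℝ).Finite) :
    convexHull ℝ (s.extremePoints ℝ) = s := by
  rw [← (hfin.isClosed_convexHull ℝ).closure_eq]
  exact closure_convexHull_extremePoints hscomp hsconv

theorem Fin.sum_smul_eq_add_sum_smul_sub {R E : Type*} [Ring R] [AddCommGroup E] [Module R E]
    {m : ℕ} (v : Fin (m + 1) → E) {μ : Fin (m + 1) → R}
    (hμ : ∑ i, μ i = 1) :
    ∑ i, μ i • v i = v 0 + ∑ i : Fin m, μ i.succ • (v i.succ - v 0) := by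
  rw [Fin.sum_univ_succ] at hμ ⊢
  simp only [smul_sub, Finset.sum_sub_distrib, ← Finset.sum_smul, eq_sub_of_add_eq' hμ, sub_smul,
    one_smul]
  abel

section Simplex

variable {R E : Type*} [Field R] [LinearOrder R] [IsStrictOrderedRing R] [AddCommGroup E]
  [Module R E]

theorem convexHull_range_eq_image_stdSimplex {ι : Type*} [Fintype ι] (v : ι → E) :
    convexHull R (range v) = (fun μ : ι → R => ∑ i, μ i • v i) '' stdSimplex R ι := by
  classical
  have hL : (fun μ : ι → R => ∑ i, μ i • v i) = Fintype.linearCombination R v :=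
    funext fun μ => (Fintype.linearCombination_apply R v μ).symm
  rw [hL, ← convexHull_rangle_single_eq_stdSimplex, LinearMap.image_convexHull, ← range_comp]
  congr
  funext i
  simp

theorem setOf_nonneg_sum_le_one_eq_image_tail_stdSimplex (m : ℕ) :
    {w : Fin m → R | (∀ i, 0 ≤ w i) ∧ ∑ i, w i ≤ 1} =
      Fin.tail '' stdSimplex R (Fin (m + 1)) := by
  ext w
  constructor
  · rintro ⟨hw₀, hw₁⟩
    refine ⟨Fin.cons (1 - ∑ i, w i) w, ⟨fun i => ?_, ?_⟩, Fin.tail_cons _ _⟩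
    · induction i using Fin.cases with
      | zero => simpa using hw₁
      | succ i => simpa using hw₀ i
    · simp [Fin.sum_univ_succ]
  · rintro ⟨μ, ⟨hμ₀, hμ₁⟩, rfl⟩
    rw [Fin.sum_univ_succ] at hμ₁
    exact ⟨fun i => hμ₀ i.succ, by simp only [Fin.tail]; linarith [hμ₀ 0]⟩

theorem convexHull_range_eq_image_setOf_nonneg_sum_le_one {m : ℕ} (v : Fin (m + 1) → E) :
    convexHull R (range v) =
      (fun w : Fin m → R => v 0 + ∑ i : Fin m, w i • (v i.succ - v 0)) ''
        {w : Fin m → R | (∀ i, 0 ≤ w i) ∧ ∑ i, w i ≤ 1} := by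
  rw [setOf_nonneg_sum_le_one_eq_image_tail_stdSimplex, image_image,
    convexHull_range_eq_image_stdSimplex]
  exact image_congr fun μ hμ => Fin.sum_smul_eq_add_sum_smul_sub v hμ.2

end Simplex

theorem polytope_is_image_of_simplex_general
    (n k nh : ℕ) (A : Matrix (Fin k) (Fin n) ℝ) (b : Fin k → ℝ)
    (P : Set (Fin n → ℝ)) (hP : P = {x | ∀ i, A.mulVec x i ≤ b i})
    (hcompact : IsCompact P)
    (v : Fin (nh + 1) → (Fin n → ℝ))
    (hvert : Set.range v = Set.extremePoints ℝ P) :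
    P = (fun w : Fin nh → ℝ => v 0 + ∑ i : Fin nh, (w i) • (v i.succ - v 0)) ''
        {w : Fin nh → ℝ | (∀ i, 0 ≤ w i) ∧ (∑ i, w i) ≤ 1} ∧
    P = convexHull ℝ (Set.range v) := by
  have hconv : Convex ℝ P := hP ▸ convex_setOf_mulVec_le A b
  have hhull : P = convexHull ℝ (range v) := by
    rw [hvert, hcompact.convexHull_extremePoints_eq hconv (hvert ▸ finite_range v)]
  exact ⟨hhull.trans (convexHull_range_eq_image_setOf_nonneg_sum_le_one v), hhull⟩

/-- A compact convex polytope `P^H = {x : A x ⪯ b}` with nonempty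
interior, whose set of vertices (extreme points) is `{v₀, …, v_n̂}`, equals the
image of the standard simplex `{w ⪰ 0, ‖w‖₁ ≤ 1}` under `w ↦ v₀ + V̂ w`
(equivalently, `P^H` is the convex hull of its vertices). -/
theorem polytope_is_image_of_simplex
    (n k nh : ℕ) (A : Matrix (Fin k) (Fin n) ℝ) (b : Fin k → ℝ)
    (P : Set (Fin n → ℝ)) (hP : P = {x | ∀ i, A.mulVec x i ≤ b i})
    (hcompact : IsCompact P) (hint : (interior P).Nonempty)
    (v : Fin (nh + 1) → (Fin n → ℝ))
    (hvert : Set.range v = Set.extremePoints ℝ P) :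
    P = (fun w : Fin nh → ℝ => v 0 + ∑ i : Fin nh, (w i) • (v i.succ - v 0)) ''
        {w : Fin nh → ℝ | (∀ i, 0 ≤ w i) ∧ (∑ i, w i) ≤ 1} ∧
    P = convexHull ℝ (Set.range v) :=
  polytope_is_image_of_simplex_general n k nh A b P hP hcompact v hvert
end

section
/- The Hermite-type interpolation problem in the spline space of piecewise degree-(2s−1) polynomials on the partition t₀ < ... < t_M with C^{2s−d_i−1} smoothness at each interior knot t_i, which prescribes derivatives of orders 0, ..., s−1 at t₀ and t_M and derivatives of orders 0, ..., d_i−1 at each interior t_i (with 1 ≤ d_i ≤ s), has a unique solution for any prescribed data. -/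
open Polynomial

/-- Jump of the `j`-th derivative across interior knot `k` (pieces indexed by
`Fin (m+1)`, interior knots by `Fin m`, timestamps by `Fin (m+2)`). -/
noncomputable def knotJump (m : ℕ) (t : Fin (m + 2) → ℝ) (k : Fin m) (j : ℕ) :
    (Fin (m + 1) → Polynomial ℝ) →ₗ[ℝ] ℝ :=
  ((Polynomial.leval (t k.succ.castSucc)).comp
      ((((Polynomial.derivative : Module.End ℝ (Polynomial ℝ)) ^ j :
          Module.End ℝ (Polynomial ℝ)) :
        Polynomial ℝ →ₗ[ℝ] Polynomial ℝ).comp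
        (LinearMap.proj k.castSucc))) -
  ((Polynomial.leval (t k.succ.castSucc)).comp
      ((((Polynomial.derivative : Module.End ℝ (Polynomial ℝ)) ^ j :
          Module.End ℝ (Polynomial ℝ)) :
        Polynomial ℝ →ₗ[ℝ] Polynomial ℝ).comp
        (LinearMap.proj k.succ)))

/-- Splines of piecewise degree `≤ 2s−1` that are `C^{2s−d_k−1}` across each
interior knot `k`. -/
noncomputable def splineSpace (s m : ℕ) (t : Fin (m + 2) → ℝ) (d : Fin m → ℕ) :
    Submodule ℝ (Fin (m + 1) → Polynomial ℝ) :=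
  (⨅ i : Fin (m + 1),
    (Polynomial.degreeLE ℝ (2 * s - 1 : ℕ)).comap (LinearMap.proj i)) ⊓
  (⨅ k : Fin m, ⨅ j : Fin (2 * s - d k), LinearMap.ker (knotJump m t k j))

/-!
A spline `p` with zero Hermite data has zero energy `∫ (p⁽ˢ⁾)²` over `[t₀, t_M]`. On each piece,
integrating `(pᵢ⁽ˢ⁾)²` by parts `s` times gives a polynomial antiderivative `Fᵢ`, which vanishes at
`t₀` and `t_M`. It is also continuous across each knot: smoothness controls the derivatives of order
`< 2s - d_k`, and the data kill those of order `< d_k`. Since the `Fᵢ` are increasing and telescope to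
`0`, each is constant, so every piece has degree `< s`. The data at `t₀` and the smoothness at the
knots then force all pieces to vanish. So the linear map that sends a piecewise polynomial of degree
`< 2s` to its knot jumps and Hermite data is injective. Its domain and codomain both have dimension
`(m + 1) · 2s`, so it is bijective.
-/

theorem LinearMap.existsUnique_mem_and_apply_eq {K V U : Type*} [DivisionRing K]
    [AddCommGroup V] [Module K V] [AddCommGroup U] [Module K U] [FiniteDimensional K U]
    (f : V →ₗ[K] U) (W : Submodule K V) (hf : ∀ v ∈ W, f v = 0 → v = 0)
    (hW : Module.finrank K W = Module.finrank K U) (y : U) :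
    ∃! v, v ∈ W ∧ f v = y := by
  have hinj : Function.Injective (f.domRestrict W) :=
    LinearMap.ker_eq_bot.1 <| LinearMap.ker_eq_bot'.2 fun w hw =>
      Subtype.ext (hf w w.2 hw)
  have : FiniteDimensional K W := Module.Finite.of_injective _ hinj
  obtain ⟨w, hw⟩ := (LinearMap.injective_iff_surjective_of_finrank_eq_finrank hW).1 hinj y
  refine ⟨w, ⟨w.2, hw⟩, fun v ⟨hv, hfv⟩ => ?_⟩
  have hfw : f w = y := hw
  exact sub_eq_zero.1 <| hf _ (W.sub_mem hv w.2) (by rw [map_sub, hfv, hfw, sub_self])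

def Submodule.piUnivEquiv {R ι : Type*} [Semiring R] {φ : ι → Type*}
    [∀ i, AddCommMonoid (φ i)] [∀ i, Module R (φ i)] (p : (i : ι) → Submodule R (φ i)) :
    Submodule.pi Set.univ p ≃ₗ[R] (i : ι) → p i where
  toFun x i := ⟨x.1 i, x.2 i trivial⟩
  invFun y := ⟨fun i => y i, fun i _ => (y i).2⟩
  map_add' _ _ := rfl
  map_smul' _ _ := rfl
  left_inv _ := rfl
  right_inv _ := rfl

theorem Fin.eq_of_le_of_castSucc_eq_succ {α : Type*} [AddCommGroup α] [PartialOrder α]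
    [IsOrderedAddMonoid α] {m : ℕ} {a b : Fin (m + 1) → α} (hab : ∀ i, a i ≤ b i)
    (hlink : ∀ k : Fin m, b k.castSucc = a k.succ) (hends : b (Fin.last m) = a 0) :
    a = b := by
  have hsum : ∑ i, (b i - a i) = 0 := by
    rw [Finset.sum_sub_distrib, Fin.sum_univ_castSucc b, Fin.sum_univ_succ a]
    simp only [hlink, hends]
    abel
  funext i
  exact (sub_eq_zero.1 <| (Finset.sum_eq_zero_iff_of_nonneg fun i _ => sub_nonneg.2 (hab i)).1
    hsum i (Finset.mem_univ i)).symm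

namespace Polynomial

theorem eq_zero_of_iterate_derivative_eq_zero {R : Type*} [Semiring R] [IsAddTorsionFree R]
    {n : ℕ} {p : R[X]} {a : R} (hp : derivative^[n] p = 0)
    (ha : ∀ j < n, (derivative^[j] p).eval a = 0) : p = 0 := by
  induction n generalizing p with
  | zero => exact hp
  | succ n ih =>
    have hp' : derivative p = 0 :=
      ih (by rwa [← Function.iterate_succ_apply]) fun j hj => by
        rw [← Function.iterate_succ_apply]
        exact ha (j + 1) (by omega)
    rw [eq_C_of_derivative_eq_zero hp'] at ha ⊢
    simpa using ha 0 n.succ_pos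

theorem derivative_eq_zero_of_monotone_of_eval_eq {P : ℝ[X]} (hP : Monotone fun x => P.eval x)
    {a b : ℝ} (hab : a < b) (heq : P.eval a = P.eval b) : derivative P = 0 := by
  have hC : P - C (P.eval a) = 0 := by
    refine eq_zero_of_infinite_isRoot _ ((Set.Icc_infinite hab).mono fun x hx => ?_)
    have := hP hx.1
    have := hP hx.2
    simp only [Set.mem_ofPred_eq, IsRoot.def, eval_sub, eval_C]
    linarith
  rw [sub_eq_zero.1 hC, derivative_C]

noncomputable def derivEval {R : Type*} [Semiring R] (j : ℕ) (x : R) :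
    R[X] →ₗ[R] R :=
  (leval x).comp ((derivative : Module.End R R[X]) ^ j)

@[simp] theorem derivEval_apply {R : Type*} [Semiring R] (j : ℕ) (x : R) (p : R[X]) :
    derivEval j x p = (derivative^[j] p).eval x := by
  simp [derivEval, Module.End.pow_apply]

section Energy

variable {R : Type*} [CommRing R] {s : ℕ}

/-- Obtained by integrating `(P⁽ˢ⁾)²` by parts `s` times. -/
noncomputable def energyPrimitive (s : ℕ) (P : R[X]) : R[X] :=
  ∑ j ∈ Finset.range s, (-1) ^ j * derivative^[s + j] P * derivative^[s - 1 - j] P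

theorem derivative_energyPrimitive {P : R[X]} (hP : derivative^[2 * s] P = 0) :
    derivative (energyPrimitive s P) = (derivative^[s] P) ^ 2 := by
  set G : ℕ → R[X] := fun j => (-1) ^ j * derivative^[s + j] P * derivative^[s - j] P
  have hterm : ∀ j ∈ Finset.range s, derivative
      ((-1) ^ j * derivative^[s + j] P * derivative^[s - 1 - j] P) = G j - G (j + 1) := by
    intro j hj
    have hj : j < s := Finset.mem_range.1 hj
    have h1 : derivative (derivative^[s + j] P) = derivative^[s + (j + 1)] P :=
      (Function.iterate_succ_apply' _ _ _).symm
    have h2 : derivative (derivative^[s - 1 - j] P) = derivative^[s - j] P := by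
      rw [← Function.iterate_succ_apply' derivative]
      congr 2
      omega
    have h3 : s - (j + 1) = s - 1 - j := by omega
    simp only [G, derivative_mul, derivative_pow, derivative_neg, derivative_one, h1, h2, h3]
    ring
  have hGs : G s = 0 := by simp [G, ← two_mul, hP]
  rw [energyPrimitive, derivative_sum, Finset.sum_congr rfl hterm, Finset.sum_range_sub', hGs]
  simp [G, sq]

theorem eval_energyPrimitive_eq_zero {P : R[X]} {a : R}
    (hP : ∀ j < s, (derivative^[j] P).eval a = 0) : (energyPrimitive s P).eval a = 0 := by
  rw [energyPrimitive, eval_finsetSum]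
  refine Finset.sum_eq_zero fun j hj => ?_
  rw [eval_mul, hP _ (by have := Finset.mem_range.1 hj; omega), mul_zero]

/-- Each term of the energy primitive contains a derivative of order `< d` or only derivatives
of orders `< 2s - d`. -/
theorem eval_energyPrimitive_eq {d : ℕ} (hds : d ≤ s) {P Q : R[X]} {a : R}
    (hPQ : ∀ j < 2 * s - d, (derivative^[j] P).eval a = (derivative^[j] Q).eval a)
    (hP : ∀ j < d, (derivative^[j] P).eval a = 0) :
    (energyPrimitive s P).eval a = (energyPrimitive s Q).eval a := by
  rw [energyPrimitive, energyPrimitive, eval_finsetSum, eval_finsetSum]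
  refine Finset.sum_congr rfl fun j hj => ?_
  have hj : j < s := Finset.mem_range.1 hj
  simp only [eval_mul]
  by_cases hjd : j + d < s
  · rw [hPQ (s + j) (by omega), hPQ (s - 1 - j) (by omega)]
  · rw [← hPQ (s - 1 - j) (by omega), hP (s - 1 - j) (by omega), mul_zero, mul_zero]

theorem monotone_eval_energyPrimitive {P : ℝ[X]} (hP : derivative^[2 * s] P = 0) :
    Monotone fun x => (energyPrimitive s P).eval x :=
  monotone_of_deriv_nonneg (energyPrimitive s P).differentiable fun x => by
    rw [Polynomial.deriv, derivative_energyPrimitive hP, eval_pow]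
    exact sq_nonneg _

end Energy

end Polynomial

@[simp] theorem knotJump_apply (m : ℕ) (t : Fin (m + 2) → ℝ) (k : Fin m) (j : ℕ)
    (p : Fin (m + 1) → ℝ[X]) :
    knotJump m t k j p = (derivative^[j] (p k.castSucc)).eval (t k.succ.castSucc) -
      (derivative^[j] (p k.succ)).eval (t k.succ.castSucc) := by
  simp [knotJump, Module.End.pow_apply]

noncomputable def piecewisePoly (n m : ℕ) : Submodule ℝ (Fin (m + 1) → ℝ[X]) :=
  Submodule.pi Set.univ fun _ => degreeLT ℝ n

theorem mem_piecewisePoly {n m : ℕ} {p : Fin (m + 1) → ℝ[X]} :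
    p ∈ piecewisePoly n m ↔ ∀ i, p i ∈ degreeLT ℝ n := by
  simp [piecewisePoly, Submodule.mem_pi]

theorem finrank_piecewisePoly (n m : ℕ) :
    Module.finrank ℝ (piecewisePoly n m) = (m + 1) * n := by
  rw [piecewisePoly, ((Submodule.piUnivEquiv _).trans
    (LinearEquiv.piCongrRight fun _ => degreeLTEquiv ℝ n)).finrank_eq]
  simp [Module.finrank_pi_fintype]

abbrev SplineData (s m : ℕ) (d : Fin m → ℕ) : Type :=
  ((k : Fin m) → Fin (2 * s - d k) → ℝ) × (Fin s → ℝ) × (Fin s → ℝ) ×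
    ((k : Fin m) → Fin (d k) → ℝ)

noncomputable def splineData (s m : ℕ) (t : Fin (m + 2) → ℝ) (d : Fin m → ℕ) :
    (Fin (m + 1) → ℝ[X]) →ₗ[ℝ] SplineData s m d :=
  (LinearMap.pi fun k => LinearMap.pi fun j : Fin (2 * s - d k) => knotJump m t k j).prod <|
    (LinearMap.pi fun j : Fin s => (derivEval j (t 0)).comp (LinearMap.proj 0)).prod <|
      (LinearMap.pi fun j : Fin s =>
        (derivEval j (t (Fin.last (m + 1)))).comp (LinearMap.proj (Fin.last m))).prod <|
        LinearMap.pi fun k => LinearMap.pi fun j : Fin (d k) =>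
          (derivEval j (t k.succ.castSucc)).comp (LinearMap.proj k.castSucc)

theorem splineData_eq_iff {s m : ℕ} {t : Fin (m + 2) → ℝ} {d : Fin m → ℕ}
    {p : Fin (m + 1) → ℝ[X]} {c : SplineData s m d} :
    splineData s m t d p = c ↔
      (∀ k (j : Fin (2 * s - d k)), knotJump m t k j p = c.1 k j) ∧
      (∀ j : Fin s, (derivative^[j] (p 0)).eval (t 0) = c.2.1 j) ∧
      (∀ j : Fin s, (derivative^[j] (p (Fin.last m))).eval (t (Fin.last (m + 1))) = c.2.2.1 j) ∧
      (∀ k (j : Fin (d k)),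
        (derivative^[j] (p k.castSucc)).eval (t k.succ.castSucc) = c.2.2.2 k j) := by
  simp [splineData, Prod.ext_iff, funext_iff]

section SplineSpace

variable {s m : ℕ} {t : Fin (m + 2) → ℝ} {d : Fin m → ℕ}

theorem iterate_derivative_pieces_eq_zero (hmono : StrictMono t) (hds : ∀ k, d k ≤ s)
    {p : Fin (m + 1) → ℝ[X]} (hdeg : ∀ i, derivative^[2 * s] (p i) = 0)
    (hjump : ∀ k, ∀ j < 2 * s - d k, (derivative^[j] (p k.castSucc)).eval (t k.succ.castSucc) =
      (derivative^[j] (p k.succ)).eval (t k.succ.castSucc))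
    (hfirst : ∀ j < s, (derivative^[j] (p 0)).eval (t 0) = 0)
    (hlast : ∀ j < s, (derivative^[j] (p (Fin.last m))).eval (t (Fin.last (m + 1))) = 0)
    (hknot : ∀ k, ∀ j < d k, (derivative^[j] (p k.castSucc)).eval (t k.succ.castSucc) = 0) :
    ∀ i, derivative^[s] (p i) = 0 := by
  set F := fun i => energyPrimitive s (p i)
  have hmonoF i : Monotone fun x => (F i).eval x := monotone_eval_energyPrimitive (hdeg i)
  have hF : (fun i => (F i).eval (t i.castSucc)) = fun i => (F i).eval (t i.succ) := by
    refine Fin.eq_of_le_of_castSucc_eq_succ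
      (fun i => hmonoF i (hmono Fin.castSucc_lt_succ).le) (fun k => ?_) ?_
    · rw [Fin.succ_castSucc]
      exact eval_energyPrimitive_eq (hds k) (hjump k) (hknot k)
    · rw [Fin.succ_last, Fin.castSucc_zero, eval_energyPrimitive_eq_zero hlast,
        eval_energyPrimitive_eq_zero hfirst]
  intro i
  have hF' := derivative_eq_zero_of_monotone_of_eval_eq (hmonoF i)
    (hmono Fin.castSucc_lt_succ) (congrFun hF i)
  rw [derivative_energyPrimitive (hdeg i)] at hF'
  exact pow_eq_zero_iff two_ne_zero |>.1 hF'

theorem mem_splineSpace_iff (hs : 1 ≤ s) {p : Fin (m + 1) → ℝ[X]} :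
    p ∈ splineSpace s m t d ↔
      p ∈ piecewisePoly (2 * s) m ∧ ∀ k (j : Fin (2 * s - d k)), knotJump m t k j p = 0 := by
  have hdeg : degreeLE ℝ ↑(2 * s - 1) = degreeLT ℝ (2 * s) := by
    rw [← degreeLT_succ_eq_degreeLE, Nat.sub_add_cancel (by omega)]
  simp [splineSpace, mem_piecewisePoly, hdeg]

theorem eq_zero_of_mem_piecewisePoly_of_splineData_eq_zero (hmono : StrictMono t)
    (hds : ∀ k, d k ≤ s) :
    ∀ p ∈ piecewisePoly (2 * s) m, splineData s m t d p = 0 → p = 0 := by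
  intro p hp hdata
  obtain ⟨hjump, hfirst, hlast, hknot⟩ := splineData_eq_iff.1 hdata
  replace hjump k j (hj : j < 2 * s - d k) :
      (derivative^[j] (p k.castSucc)).eval (t k.succ.castSucc) =
        (derivative^[j] (p k.succ)).eval (t k.succ.castSucc) :=
    sub_eq_zero.1 (by simpa using hjump k ⟨j, hj⟩)
  have hlow := iterate_derivative_pieces_eq_zero hmono hds
    (fun i => iterate_derivative_eq_zero_of_degree_lt (mem_degreeLT.1 (mem_piecewisePoly.1 hp i)))
    hjump (fun j hj => hfirst ⟨j, hj⟩) (fun j hj => hlast ⟨j, hj⟩) (fun k j hj => hknot k ⟨j, hj⟩)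
  funext i
  induction i using Fin.induction with
  | zero => exact eq_zero_of_iterate_derivative_eq_zero (hlow 0) fun j hj => hfirst ⟨j, hj⟩
  | succ k ih =>
    refine eq_zero_of_iterate_derivative_eq_zero (a := t k.succ.castSucc) (hlow k.succ)
      fun j hj => ?_
    rw [← hjump k j (by have := hds k; omega), ih, Pi.zero_apply, iterate_derivative_zero,
      eval_zero]

theorem finrank_piecewisePoly_eq_finrank_splineData (hds : ∀ k, d k ≤ s) :
    Module.finrank ℝ (piecewisePoly (2 * s) m) = Module.finrank ℝ (SplineData s m d) := by
  have hsum : ∑ k, (2 * s - d k) + ∑ k, d k = m * (2 * s) := by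
    rw [← Finset.sum_add_distrib, Finset.sum_congr rfl fun k _ => Nat.sub_add_cancel (by
      have := hds k; omega)]
    simp
  simp only [finrank_piecewisePoly, Module.finrank_prod, Module.finrank_pi_fintype,
    Module.finrank_self, Finset.sum_const, Finset.card_univ, Fintype.card_fin, smul_eq_mul,
    mul_one]
  linarith

end SplineSpace

/-- The Hermite-type interpolation problem in the spline space of
piecewise degree-`(2s−1)` polynomials with `C^{2s−d_k−1}` smoothness at interior
knots, prescribing derivatives of orders `0, …, s−1` at both endpoints and
derivatives of orders `0, …, d_k−1` at each interior knot (`1 ≤ d_k ≤ s`),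
has a unique solution for any prescribed data. -/
theorem splineSpace_hermite_interpolation_unique
    (s m : ℕ) (hs : 1 ≤ s) (t : Fin (m + 2) → ℝ) (hmono : StrictMono t)
    (d : Fin m → ℕ) (hd : ∀ k, 1 ≤ d k ∧ d k ≤ s)
    (b0 bf : Fin s → ℝ) (qd : (k : Fin m) → Fin (d k) → ℝ) :
    ∃! p : Fin (m + 1) → Polynomial ℝ,
      p ∈ splineSpace s m t d ∧
      (∀ j : Fin s,
        (Polynomial.derivative^[(j : ℕ)] (p 0)).eval (t 0) = b0 j) ∧
      (∀ j : Fin s,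
        (Polynomial.derivative^[(j : ℕ)] (p (Fin.last m))).eval
          (t (Fin.last (m + 1))) = bf j) ∧
      (∀ k : Fin m, ∀ j : Fin (d k),
        (Polynomial.derivative^[(j : ℕ)] (p k.castSucc)).eval
          (t k.succ.castSucc) = qd k j) := by
  have hds k : d k ≤ s := (hd k).2
  refine (existsUnique_congr fun p => ?_).2 <|
    (splineData s m t d).existsUnique_mem_and_apply_eq (piecewisePoly (2 * s) m)
      (eq_zero_of_mem_piecewisePoly_of_splineData_eq_zero hmono hds)
      (finrank_piecewisePoly_eq_finrank_splineData hds) (0, b0, bf, qd)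
  rw [mem_splineSpace_iff hs, splineData_eq_iff, and_assoc]
  rfl
end
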